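/- arXiv:2009.06597 — 3 statements merged into one kernel-verified Lean document; each statement's English description precedes it below -/
import Mathlib

section
/- The formal power series identity (-q;q^2)_\infty^2 (q^2;q^2)_\infty = \sum_{n=-\infty}^{\infty} q^{n^2} holds (a specialization of the Jacobi triple product). -/
open PowerSeries Finset

/-- Formal infinite product of power series `F 0 * F 1 * ⋯`, well defined when
`F k ≡ 1 (mod X^(k+1))`: the coefficient of `X^n` is that of the partial product
of the first `n+1` factors. -/
noncomputable def iProd (F : ℕ → PowerSeries ℚ) : PowerSeries ℚ :=
  PowerSeries.mk fun n => PowerSeries.coeff n (∏ k ∈ Finset.range (n + 1), F k)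

/-- `(-q; q)_∞ = ∏_{k≥1} (1 + q^k)` -/
noncomputable def P₁ : PowerSeries ℚ := iProd fun k => 1 + (X : PowerSeries ℚ) ^ (k + 1)
/-- `(q; q)_∞ = ∏_{k≥1} (1 - q^k)` -/
noncomputable def P₂ : PowerSeries ℚ := iProd fun k => 1 - (X : PowerSeries ℚ) ^ (k + 1)
/-- `(-q²; q²)_∞ = ∏_{k≥1} (1 + q^{2k})` -/
noncomputable def P₃ : PowerSeries ℚ := iProd fun k => 1 + (X : PowerSeries ℚ) ^ (2 * k + 2)
/-- `(q²; q²)_∞ = ∏_{k≥1} (1 - q^{2k})` -/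
noncomputable def P₄ : PowerSeries ℚ := iProd fun k => 1 - (X : PowerSeries ℚ) ^ (2 * k + 2)
/-- `(-q; q²)_∞ = ∏_{k≥0} (1 + q^{2k+1})` -/
noncomputable def P₅ : PowerSeries ℚ := iProd fun k => 1 + (X : PowerSeries ℚ) ^ (2 * k + 1)
/-- `(q; q²)_∞ = ∏_{k≥0} (1 - q^{2k+1})` -/
noncomputable def P₆ : PowerSeries ℚ := iProd fun k => 1 - (X : PowerSeries ℚ) ^ (2 * k + 1)

/-- The Jacobi theta series `∑_{n ∈ ℤ} q^{n²}`. -/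
noncomputable def theta : PowerSeries ℚ :=
  PowerSeries.mk fun m => ∑ᶠ n : ℤ, if n ^ 2 = (m : ℤ) then (1 : ℚ) else 0

/-- The signed theta series `∑_{n ∈ ℤ} (-1)^n q^{n²}`. -/
noncomputable def thetaSigned : PowerSeries ℚ :=
  PowerSeries.mk fun m => ∑ᶠ n : ℤ, if n ^ 2 = (m : ℤ) then ((-1 : ℚ) ^ n) else 0

/-!
Expanding `∏_{k<2M} (x^{2M} + x·x^{2k})` by the `q`-binomial theorem at `q = x²` gives the finite
identity `(∏_{k<M} (1 + x^{2k+1}))² = ∑_{j=0}^{2M} x^{(j-M)²} [2M, j]_{x²}`. Modulo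
`x^{2 min(j, 2M-j) + 2}` the Gaussian binomial `[2M, j]_{x²}` is the inverse of `(x²; x²)_M`, so after
multiplying by `(x²; x²)_M` the `j`-th term agrees with `x^{(j-M)²}` in every degree below `M`.
Since the partial products of `(-q; q²)_∞` and `(q²; q²)_∞` with `M` factors are exact below degree
`M` too, comparing the coefficient of `X^N` with `M = N + 1` gives the theorem.
-/

section QAnalogues

variable {R : Type*} [CommRing R]

def qBinom (q : R) : ℕ → ℕ → R
  | _, 0 => 1
  | 0, _ + 1 => 0
  | m + 1, j + 1 => qBinom q m (j + 1) + q ^ (m - j) * qBinom q m j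

/-- `(q; q)_r` -/
def qPochhammer (q : R) (r : ℕ) : R := ∏ k ∈ range r, (1 - q ^ (k + 1))

variable (q : R)

@[simp] lemma qBinom_zero_right (m : ℕ) : qBinom q m 0 = 1 := by cases m <;> rfl

lemma qBinom_succ_succ (m j : ℕ) :
    qBinom q (m + 1) (j + 1) = qBinom q m (j + 1) + q ^ (m - j) * qBinom q m j := rfl

lemma qBinom_eq_zero_of_lt : ∀ {m j : ℕ}, m < j → qBinom q m j = 0
  | 0, _ + 1, _ => rfl
  | m + 1, j + 1, h => by
    rw [qBinom_succ_succ, qBinom_eq_zero_of_lt (by omega : m < j + 1),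
      qBinom_eq_zero_of_lt (by omega : m < j), mul_zero, add_zero]

lemma qPochhammer_succ (r : ℕ) : qPochhammer q (r + 1) = qPochhammer q r * (1 - q ^ (r + 1)) :=
  prod_range_succ _ _

/-- The `q`-binomial theorem. -/
theorem prod_add_mul_pow_eq_sum_qBinom (a b : R) (m : ℕ) :
    ∏ k ∈ range m, (b + a * q ^ k) =
      ∑ j ∈ range (m + 1), q ^ j.choose 2 * qBinom q m j * a ^ j * b ^ (m - j) := by
  induction m with
  | zero => simp
  | succ m ih =>
    set S := ∑ j ∈ range (m + 1), q ^ j.choose 2 * qBinom q m j * a ^ j * b ^ (m - j) with hS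
    have hb : ∑ j ∈ range (m + 1), q ^ (j + 1).choose 2 * qBinom q m (j + 1) * a ^ (j + 1) *
        b ^ (m - j) + b ^ (m + 1) = S * b := by
      have hterm : ∀ j ∈ range m, q ^ (j + 1).choose 2 * qBinom q m (j + 1) * a ^ (j + 1) *
          b ^ (m - j) = q ^ (j + 1).choose 2 * qBinom q m (j + 1) * a ^ (j + 1) *
          b ^ (m - (j + 1)) * b := fun j hj => by
        rw [mul_assoc _ (b ^ _), ← pow_succ, show m - (j + 1) + 1 = m - j by
          have := mem_range.1 hj; omega]
      rw [hS, sum_range_succ, qBinom_eq_zero_of_lt q (Nat.lt_succ_self m), sum_range_succ' _ m,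
        add_mul, sum_mul, sum_congr rfl hterm]
      simp [pow_succ]
    have ha : ∑ j ∈ range (m + 1), q ^ (j + 1).choose 2 * (q ^ (m - j) * qBinom q m j) *
        a ^ (j + 1) * b ^ (m - j) = S * (a * q ^ m) := by
      rw [hS, sum_mul]
      refine sum_congr rfl fun j hj => ?_
      have hexp : (j + 1).choose 2 + (m - j) = j.choose 2 + m := by
        have := mem_range.1 hj
        have : (j + 1).choose 2 = j.choose 2 + j := by simp [Nat.choose_succ_succ', add_comm]
        omega
      rw [← mul_assoc, ← mul_assoc, ← pow_add, hexp, pow_add]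
      ring
    have hsplit : ∀ j ∈ range (m + 1), q ^ (j + 1).choose 2 * qBinom q (m + 1) (j + 1) *
        a ^ (j + 1) * b ^ (m + 1 - (j + 1)) =
        q ^ (j + 1).choose 2 * qBinom q m (j + 1) * a ^ (j + 1) * b ^ (m - j) +
          q ^ (j + 1).choose 2 * (q ^ (m - j) * qBinom q m j) * a ^ (j + 1) * b ^ (m - j) :=
      fun j _ => by rw [qBinom_succ_succ, Nat.add_sub_add_right]; ring
    rw [prod_range_succ, ih, sum_range_succ' _ (m + 1), sum_congr rfl hsplit, sum_add_distrib]
    simp only [Nat.choose_zero_succ, qBinom_zero_right, pow_zero, Nat.sub_zero, mul_one, one_mul]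
    rw [mul_add, ← hb, ← ha]
    ring

theorem qBinom_mul_qPochhammer_mul_qPochhammer {m j : ℕ} (hj : j ≤ m) :
    qBinom q m j * qPochhammer q j * qPochhammer q (m - j) = qPochhammer q m := by
  induction m generalizing j with
  | zero => obtain rfl := Nat.le_zero.1 hj; simp [qPochhammer]
  | succ m ih =>
    cases j with
    | zero => simp [qPochhammer]
    | succ j =>
      have hfirst : qBinom q m (j + 1) * qPochhammer q (j + 1) * qPochhammer q (m - j) =
          qPochhammer q m * (1 - q ^ (m - j)) := by
        rcases Nat.lt_or_ge j m with hjm | hjm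
        · rw [show m - j = m - (j + 1) + 1 by omega, qPochhammer_succ q (m - (j + 1)),
            ← mul_assoc, ih hjm]
        · rw [qBinom_eq_zero_of_lt q (by omega), show m - j = 0 by omega]
          ring
      have hsecond : q ^ (m - j) * qBinom q m j * qPochhammer q (j + 1) * qPochhammer q (m - j) =
          q ^ (m - j) * (1 - q ^ (j + 1)) * qPochhammer q m := by
        rw [qPochhammer_succ, ← ih (by omega : j ≤ m)]
        ring
      have hexp : q ^ (m - j) * q ^ (j + 1) = q ^ (m + 1) := by
        rw [← pow_add]; congr 1; omega
      rw [qBinom_succ_succ, Nat.add_sub_add_right, add_mul, add_mul, hfirst, hsecond,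
        qPochhammer_succ, ← hexp]
      ring

end QAnalogues

section Congruences

variable {R : Type*} [CommRing R]

lemma mk_span_singleton_eq_iff_dvd_sub {a x y : R} :
    Ideal.Quotient.mk (Ideal.span {a}) x = Ideal.Quotient.mk (Ideal.span {a}) y ↔ a ∣ x - y := by
  rw [Ideal.Quotient.mk_eq_mk_iff_sub_mem, Ideal.mem_span_singleton]

lemma dvd_prod_range_sub_prod_range {a : R} {F : ℕ → R} {m n : ℕ} (hmn : m ≤ n)
    (hF : ∀ k, m ≤ k → a ∣ F k - 1) : a ∣ ∏ k ∈ range n, F k - ∏ k ∈ range m, F k := by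
  obtain ⟨d, rfl⟩ := Nat.exists_eq_add_of_le hmn
  have htail : ∀ k ∈ range d, Ideal.Quotient.mk (Ideal.span {a}) (F (m + k)) = 1 := fun k _ => by
    rw [← map_one (Ideal.Quotient.mk _), mk_span_singleton_eq_iff_dvd_sub]
    exact hF _ (Nat.le_add_right _ _)
  rw [← mk_span_singleton_eq_iff_dvd_sub, prod_range_add, map_mul,
    map_prod _ (fun k => F (m + k)), prod_eq_one htail, mul_one]

/-- Modulo `q ^ c` the element `q` is nilpotent, so every factor `1 - q ^ (k + 1)` is a unit. -/
lemma isUnit_mk_qPochhammer (q : R) (c r : ℕ) :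
    IsUnit (Ideal.Quotient.mk (Ideal.span {q ^ c}) (qPochhammer q r)) := by
  have hq : IsNilpotent (Ideal.Quotient.mk (Ideal.span {q ^ c}) q) :=
    ⟨c, by rw [← map_pow, Ideal.Quotient.eq_zero_iff_dvd]⟩
  rw [qPochhammer, map_prod, IsUnit.prod_iff]
  intro k _
  rw [map_sub, map_one, map_pow]
  exact (hq.pow_succ k).isUnit_one_sub

lemma mk_qPochhammer_of_le (q : R) {s r : ℕ} (h : s ≤ r) :
    Ideal.Quotient.mk (Ideal.span {q ^ (s + 1)}) (qPochhammer q r) =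
      Ideal.Quotient.mk (Ideal.span {q ^ (s + 1)}) (qPochhammer q s) := by
  rw [mk_span_singleton_eq_iff_dvd_sub]
  refine dvd_prod_range_sub_prod_range h fun k hk => ?_
  rw [sub_sub_cancel_left, dvd_neg]
  exact pow_dvd_pow q (by omega)

/-- Modulo `q ^ (s + 1)` all of `(q; q)_j`, `(q; q)_(m - j)`, `(q; q)_m` reduce to the unit
`(q; q)_s`, so the closed form `[m, j] (q; q)_j (q; q)_(m - j) = (q; q)_m` makes `[m, j]` its
inverse. -/
theorem pow_dvd_qBinom_mul_qPochhammer_sub_one (q : R) {m j M : ℕ} (hj : j ≤ m)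
    (hM : min j (m - j) ≤ M) : q ^ (min j (m - j) + 1) ∣ qBinom q m j * qPochhammer q M - 1 := by
  set s := min j (m - j)
  have hD : ∀ r, s ≤ r → Ideal.Quotient.mk (Ideal.span {q ^ (s + 1)}) (qPochhammer q r) =
      Ideal.Quotient.mk (Ideal.span {q ^ (s + 1)}) (qPochhammer q s) :=
    fun r => mk_qPochhammer_of_le q
  have h := congrArg (Ideal.Quotient.mk (Ideal.span {q ^ (s + 1)}))
    (qBinom_mul_qPochhammer_mul_qPochhammer q hj)
  rw [map_mul, map_mul, hD j (min_le_left _ _), hD (m - j) (min_le_right _ _),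
    hD m (by omega)] at h
  rw [← mk_span_singleton_eq_iff_dvd_sub, map_mul, hD M hM, map_one]
  exact (isUnit_mk_qPochhammer q (s + 1) s).mul_left_cancel (by linear_combination h)

end Congruences

lemma two_mul_choose_two_add_self (j : ℕ) : 2 * j.choose 2 + j = j ^ 2 := by
  induction j with
  | zero => simp
  | succ j ih => rw [Nat.choose_succ_succ', Nat.choose_one_right]; linarith

lemma prod_range_pow_two_mul_add_one {α : Type*} [CommMonoid α] (x : α) (n : ℕ) :
    ∏ k ∈ range n, x ^ (2 * k + 1) = x ^ n ^ 2 := by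
  induction n with
  | zero => simp
  | succ n ih => rw [prod_range_succ, ih, ← pow_add]; ring_nf

/-- The `q`-binomial theorem for `q = x²`, `a = x`, `b = x ^ (2 * M)`, divided by
`x ^ (3 * M ^ 2)`. -/
theorem sq_prod_one_add_pow_odd {R : Type*} [CommRing R] [IsDomain R] {x : R} (hx : x ≠ 0)
    (M : ℕ) : (∏ k ∈ range M, (1 + x ^ (2 * k + 1))) ^ 2 =
      ∑ j ∈ range (2 * M + 1), x ^ ((j : ℤ) - M).natAbs ^ 2 * qBinom (x ^ 2) (2 * M) j := by
  set Q := ∏ k ∈ range M, (1 + x ^ (2 * k + 1))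
  have hlow : ∏ k ∈ range M, (x ^ (2 * M) + x * (x ^ 2) ^ k) = x ^ M ^ 2 * Q := by
    have hfactor : ∀ k ∈ range M, x ^ (2 * M) + x * (x ^ 2) ^ k =
        x ^ (2 * k + 1) * (1 + x ^ (2 * (M - 1 - k) + 1)) := fun k hk => by
      rw [show 2 * M = 2 * k + 1 + (2 * (M - 1 - k) + 1) by have := mem_range.1 hk; omega]
      ring
    rw [prod_congr rfl hfactor, prod_mul_distrib, prod_range_pow_two_mul_add_one,
      prod_range_reflect (fun k => 1 + x ^ (2 * k + 1)) M]
  have hhigh : ∏ k ∈ range M, (x ^ (2 * M) + x * (x ^ 2) ^ (M + k)) = x ^ (2 * M ^ 2) * Q := by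
    rw [prod_congr rfl fun k _ => show x ^ (2 * M) + x * (x ^ 2) ^ (M + k) =
        x ^ (2 * M) * (1 + x ^ (2 * k + 1)) by ring, prod_mul_distrib, prod_const, card_range,
      ← pow_mul]
    ring
  have hprod : ∏ k ∈ range (2 * M), (x ^ (2 * M) + x * (x ^ 2) ^ k) = x ^ (3 * M ^ 2) * Q ^ 2 := by
    rw [show range (2 * M) = range (M + M) by rw [two_mul], prod_range_add, hlow, hhigh]
    ring
  refine mul_left_cancel₀ (pow_ne_zero (3 * M ^ 2) hx) ?_
  rw [← hprod, prod_add_mul_pow_eq_sum_qBinom, mul_sum]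
  refine sum_congr rfl fun j hj => ?_
  have hjM : j ≤ 2 * M := Nat.lt_succ_iff.1 (mem_range.1 hj)
  have hexp : 2 * j.choose 2 + j + 2 * M * (2 * M - j) = 3 * M ^ 2 + ((j : ℤ) - M).natAbs ^ 2 := by
    have hchoose := two_mul_choose_two_add_self j
    zify [hjM] at hchoose ⊢
    rw [sq_abs]
    linear_combination hchoose
  calc (x ^ 2) ^ j.choose 2 * qBinom (x ^ 2) (2 * M) j * x ^ j * (x ^ (2 * M)) ^ (2 * M - j)
      = x ^ (2 * j.choose 2 + j + 2 * M * (2 * M - j)) * qBinom (x ^ 2) (2 * M) j := by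
        rw [pow_add, pow_add, pow_mul, pow_mul]; ring
    _ = x ^ (3 * M ^ 2) * (x ^ ((j : ℤ) - M).natAbs ^ 2 * qBinom (x ^ 2) (2 * M) j) := by
        rw [hexp, pow_add, mul_assoc]

section PowerSeries

variable {R : Type*} [CommRing R]

lemma coeff_eq_of_X_pow_dvd_sub {f g : R⟦X⟧} {n i : ℕ} (h : X ^ n ∣ f - g) (hi : i < n) :
    coeff i f = coeff i g := by
  rw [← sub_eq_zero, ← map_sub]
  exact X_pow_dvd_iff.1 h i hi

lemma coeff_X_pow_mul_of_X_pow_dvd_sub_one {g : R⟦X⟧} {c e N : ℕ} (hg : X ^ c ∣ g - 1)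
    (hN : N < e + c) : coeff N (X ^ e * g) = if N = e then 1 else 0 := by
  rw [coeff_eq_of_X_pow_dvd_sub (g := X ^ e) ?_ hN, coeff_X_pow]
  rw [← mul_sub_one, pow_add]
  exact mul_dvd_mul_left _ hg

lemma coeff_sq_prod_one_add_pow_odd_mul_qPochhammer [IsDomain R] {N M : ℕ} (hN : N < M) :
    coeff N ((∏ k ∈ range M, (1 + X ^ (2 * k + 1) : R⟦X⟧)) ^ 2 * qPochhammer (X ^ 2) M) =
      ∑ j ∈ range (2 * M + 1), if N = ((j : ℤ) - M).natAbs ^ 2 then 1 else 0 := by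
  rw [sq_prod_one_add_pow_odd X_ne_zero, sum_mul, map_sum]
  refine sum_congr rfl fun j hj => ?_
  have hjM : j ≤ 2 * M := Nat.lt_succ_iff.1 (mem_range.1 hj)
  have hdvd := pow_dvd_qBinom_mul_qPochhammer_sub_one (X ^ 2 : R⟦X⟧) hjM
    (M := M) (by omega)
  rw [← pow_mul] at hdvd
  rw [mul_assoc, coeff_X_pow_mul_of_X_pow_dvd_sub_one hdvd]
  have := Nat.le_self_pow two_ne_zero ((j : ℤ) - M).natAbs
  omega

end PowerSeries

lemma X_pow_dvd_iProd_sub_prod_range {F : ℕ → ℚ⟦X⟧} (hF : ∀ k, X ^ (k + 1) ∣ F k - 1) (n : ℕ) :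
    X ^ n ∣ iProd F - ∏ k ∈ range n, F k := by
  refine X_pow_dvd_iff.2 fun i hi => ?_
  rw [map_sub, sub_eq_zero, iProd, coeff_mk]
  refine (coeff_eq_of_X_pow_dvd_sub (dvd_prod_range_sub_prod_range hi fun k hk => ?_)
    i.lt_succ_self).symm
  exact (pow_dvd_pow X (by omega)).trans (hF k)

lemma coeff_theta {N M : ℕ} (hN : N < M) :
    coeff N theta = ∑ j ∈ range (2 * M + 1), if N = ((j : ℤ) - M).natAbs ^ 2 then 1 else 0 := by
  have hsupp : (Function.support fun n : ℤ => if n ^ 2 = (N : ℤ) then (1 : ℚ) else 0) ⊆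
      (range (2 * M + 1)).image fun j : ℕ => (j : ℤ) - M := by
    intro n hn
    have hn2 : n ^ 2 = N := by by_contra h; exact hn (if_neg h)
    have : n ≤ n ^ 2 := by nlinarith
    have : -n ≤ n ^ 2 := by nlinarith
    refine mem_image.2 ⟨(n + M).toNat, mem_range.2 (by omega), by omega⟩
  rw [theta, coeff_mk, finsum_eq_sum_of_support_subset _ hsupp,
    sum_image fun a _ b _ h => by simpa using h]
  refine sum_congr rfl fun j _ => if_congr ?_ rfl rfl
  rw [eq_comm, ← Int.natAbs_sq]
  norm_cast

theorem jacobi_triple_product_specialization : P₅ ^ 2 * P₄ = theta := by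
  ext N
  set M := N + 1
  set Q : ℚ⟦X⟧ := ∏ k ∈ range M, (1 + X ^ (2 * k + 1))
  set D : ℚ⟦X⟧ := qPochhammer (X ^ 2) M
  have h₅ : X ^ M ∣ P₅ - Q :=
    X_pow_dvd_iProd_sub_prod_range (fun k => by
      rw [add_sub_cancel_left]; exact pow_dvd_pow X (by omega)) M
  have h₄ : X ^ M ∣ P₄ - D := by
    have hP₄ : P₄ = iProd fun k => 1 - (X ^ 2) ^ (k + 1) := by
      simp only [P₄, ← pow_mul, mul_add, mul_one]
    rw [hP₄]
    exact X_pow_dvd_iProd_sub_prod_range (fun k => by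
      rw [sub_sub_cancel_left, dvd_neg, ← pow_mul]; exact pow_dvd_pow X (by omega)) M
  have h : X ^ M ∣ P₅ ^ 2 * P₄ - Q ^ 2 * D := by
    rw [show P₅ ^ 2 * P₄ - Q ^ 2 * D = (P₅ - Q) * ((P₅ + Q) * P₄) + Q ^ 2 * (P₄ - D) by ring]
    exact dvd_add (dvd_mul_of_dvd_left h₅ _) (dvd_mul_of_dvd_right h₄ _)
  rw [coeff_eq_of_X_pow_dvd_sub h N.lt_succ_self,
    coeff_sq_prod_one_add_pow_odd_mul_qPochhammer N.lt_succ_self, coeff_theta N.lt_succ_self]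
end

section
/- For every positive integer n, \left(\frac{2n}{3} + \frac{1}{8} - \frac{1}{8\sqrt{n+1}}\right)\sqrt{n+1} < \sum_{k=1}^{n} \sqrt{k} < \left(\frac{2n}{3} + \frac{1}{6} - \frac{1}{6\sqrt{n+1}}\right)\sqrt{n+1}. -/
/-! Both bounds have the shape `(2x/3 + c) √(x+1) - c`, with `c = 1/8` resp. `c = 1/6`, and vanish at
`x = 0`. So it suffices that the increment of the lower bound from `x` to `x + 1` is smaller than
`√(x+1)` and that of the upper bound larger; squaring, each comparison reduces to a cubic polynomial
inequality whose two sides differ by `16x + 7` resp. by the constant `1`. -/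

open Finset Real

lemma mul_sqrt_lt_mul_sqrt {a b x y : ℝ} (hb : 0 ≤ b) (hx : 0 ≤ x) (hy : 0 ≤ y)
    (h : a ^ 2 * x < b ^ 2 * y) : a * √x < b * √y := by
  refine lt_of_pow_lt_pow_left₀ 2 (by positivity) ?_
  rwa [mul_pow, mul_pow, sq_sqrt hx, sq_sqrt hy]

noncomputable def sqrtSumLower (x : ℝ) : ℝ := (2 * x / 3 + 1 / 8) * √(x + 1) - 1 / 8

noncomputable def sqrtSumUpper (x : ℝ) : ℝ := (2 * x / 3 + 1 / 6) * √(x + 1) - 1 / 6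

lemma sqrtSumLower_zero : sqrtSumLower 0 = 0 := by norm_num [sqrtSumLower]

lemma sqrtSumUpper_zero : sqrtSumUpper 0 = 0 := by norm_num [sqrtSumUpper]

lemma sqrtSumLower_add_one_lt {x : ℝ} (hx : 0 ≤ x) :
    sqrtSumLower (x + 1) < sqrtSumLower x + √(x + 1) := by
  have key : (2 * (x + 1) / 3 + 1 / 8) * √(x + 1 + 1) < (2 * x / 3 + 9 / 8) * √(x + 1) :=
    mul_sqrt_lt_mul_sqrt (by positivity) (by positivity) (by positivity)
      (by nlinarith)
  unfold sqrtSumLower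
  linarith

lemma sqrtSumUpper_add_sqrt_lt {x : ℝ} (hx : 0 ≤ x) :
    sqrtSumUpper x + √(x + 1) < sqrtSumUpper (x + 1) := by
  have key : (2 * x / 3 + 7 / 6) * √(x + 1) < (2 * (x + 1) / 3 + 1 / 6) * √(x + 1 + 1) :=
    mul_sqrt_lt_mul_sqrt (by positivity) (by positivity) (by positivity)
      (by nlinarith)
  unfold sqrtSumUpper
  linarith

lemma sum_Icc_sqrt_succ (n : ℕ) :
    ∑ k ∈ Icc 1 (n + 1), √(k : ℝ) = ∑ k ∈ Icc 1 n, √(k : ℝ) + √((n : ℝ) + 1) := by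
  rw [sum_Icc_succ_top (by omega), Nat.cast_succ]

lemma sqrtSumLower_lt_sum_sqrt {n : ℕ} (hn : 0 < n) :
    sqrtSumLower n < ∑ k ∈ Icc 1 n, √(k : ℝ) := by
  induction n, hn using Nat.le_induction with
  | base => simpa [sqrtSumLower_zero] using sqrtSumLower_add_one_lt le_rfl
  | succ n _ ih =>
    rw [sum_Icc_sqrt_succ, Nat.cast_succ]
    linarith [sqrtSumLower_add_one_lt (Nat.cast_nonneg (α := ℝ) n)]

lemma sum_sqrt_lt_sqrtSumUpper {n : ℕ} (hn : 0 < n) :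
    ∑ k ∈ Icc 1 n, √(k : ℝ) < sqrtSumUpper n := by
  induction n, hn using Nat.le_induction with
  | base => simpa [sqrtSumUpper_zero] using sqrtSumUpper_add_sqrt_lt le_rfl
  | succ n _ ih =>
    rw [sum_Icc_sqrt_succ, Nat.cast_succ]
    linarith [sqrtSumUpper_add_sqrt_lt (Nat.cast_nonneg (α := ℝ) n)]

lemma sub_one_div_mul_mul_self {s : ℝ} (hs : s ≠ 0) (a c : ℝ) :
    (a - 1 / (c * s)) * s = a * s - 1 / c := by
  field_simp

theorem sum_sqrt_bounds (n : ℕ) (hn : 0 < n) :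
    ((2 * n : ℝ) / 3 + 1 / 8 - 1 / (8 * Real.sqrt (n + 1))) * Real.sqrt (n + 1)
        < ∑ k ∈ Finset.Icc 1 n, Real.sqrt k ∧
      ∑ k ∈ Finset.Icc 1 n, Real.sqrt k
        < ((2 * n : ℝ) / 3 + 1 / 6 - 1 / (6 * Real.sqrt (n + 1))) * Real.sqrt (n + 1) := by
  have hs : √((n : ℝ) + 1) ≠ 0 := (sqrt_pos.mpr (by positivity)).ne'
  rw [sub_one_div_mul_mul_self hs, sub_one_div_mul_mul_self hs]
  exact ⟨sqrtSumLower_lt_sum_sqrt hn, sum_sqrt_lt_sqrtSumUpper hn⟩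
end

section
/- Define M_1(n) = \sum_{k=1}^{n} \lfloor\sqrt{k}\rfloor and M_2(4n) = 2n + 1 + 2\lfloor\sqrt{n}\rfloor + \sum_{k=1}^{n}\lceil\sqrt{k}\rceil + \sum_{k=1}^{2n}\lfloor\sqrt{k}\rfloor. Then \lim_{n\to\infty} M_2(4n)/M_1(4n) = 1/8 + \sqrt{1/8}. -/
open Finset Filter

/-- The number of terms used by the linear recurrence to compute `p̄(n)`. -/
noncomputable def M₁ (n : ℕ) : ℕ := ∑ k ∈ Finset.Icc 1 n, ⌊Real.sqrt k⌋₊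

/-- The number of terms used by the nonlinear recurrence to compute `p̄(4n)`. -/
noncomputable def M₂four (n : ℕ) : ℕ :=
  2 * n + 1 + 2 * ⌊Real.sqrt n⌋₊ + ∑ k ∈ Finset.Icc 1 n, ⌈Real.sqrt k⌉₊
    + ∑ k ∈ Finset.Icc 1 (2 * n), ⌊Real.sqrt k⌋₊

/-!
Every summand of `M₁` and `M₂four` is within `1` of `√k`, and `∑_{k ≤ n} √k` is within `n` of
`∫₀ⁿ √x dx = (2/3) n^{3/2}`. Hence `M₁ (4n) = (16/3) n^{3/2} + O(n)` and
`M₂four n = (2/3 + (4/3)√2) n^{3/2} + O(n)`, and the ratio of the leading coefficients is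
`1/8 + √2/4 = 1/8 + √(1/8)`.
-/

open Real

lemma abs_sqrt_add_one_sub_le (x : ℝ) (hx : 0 ≤ x) :
    |√(x + 1) - 2 / 3 * ((x + 1) * √(x + 1) - x * √x)| ≤ 1 := by
  set a := √(x + 1)
  set b := √x
  have hb : 0 ≤ b := sqrt_nonneg x
  have hba : b ≤ a := sqrt_le_sqrt (by linarith)
  have ha : a ^ 2 = x + 1 := sq_sqrt (by linarith)
  have hb2 : b ^ 2 = x := sq_sqrt hx
  -- Since `a² - b² = 1`, the bracket `a³ - b³` equals `(a² + ab + b²) / (a + b)`.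
  rw [← ha, ← hb2, abs_le]
  constructor
  · nlinarith [mul_nonneg (mul_nonneg (sub_nonneg.2 hba) (sub_nonneg.2 hba))
      (by linarith : (0 : ℝ) ≤ 2 * a + b)]
  · nlinarith [mul_nonneg (mul_nonneg (sub_nonneg.2 hba) (sub_nonneg.2 hba))
      (by linarith : (0 : ℝ) ≤ a + 2 * b)]

lemma abs_sum_sqrt_sub_le (n : ℕ) :
    |∑ k ∈ Icc 1 n, √k - 2 / 3 * n * √n| ≤ n := by
  induction n with
  | zero => simp
  | succ n ih =>
    rw [sum_Icc_succ_top (by omega)]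
    push_cast
    calc |∑ k ∈ Icc 1 n, √k + √(n + 1) - 2 / 3 * (n + 1) * √(n + 1)|
        = |(∑ k ∈ Icc 1 n, √k - 2 / 3 * n * √n)
            + (√(n + 1) - 2 / 3 * ((n + 1) * √(n + 1) - n * √n))| := by ring_nf
      _ ≤ n + 1 := (abs_add_le _ _).trans
          (add_le_add ih (abs_sqrt_add_one_sub_le n n.cast_nonneg))

lemma abs_sum_sub_le_of_abs_sub_sqrt_le {f : ℕ → ℝ} (hf : ∀ k, |f k - √k| ≤ 1) (n : ℕ) :
    |∑ k ∈ Icc 1 n, f k - 2 / 3 * n * √n| ≤ 2 * n := by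
  have hdiff : |∑ k ∈ Icc 1 n, f k - ∑ k ∈ Icc 1 n, √k| ≤ n := by
    rw [← sum_sub_distrib]
    refine (abs_sum_le_sum_abs _ _).trans ((sum_le_card_nsmul _ _ 1 fun k _ => hf k).trans ?_)
    simp
  linarith [abs_sub_le (∑ k ∈ Icc 1 n, f k) (∑ k ∈ Icc 1 n, √k) (2 / 3 * n * √n),
    abs_sum_sqrt_sub_le n]

lemma abs_natFloor_sqrt_sub_le (k : ℕ) : |(⌊√k⌋₊ : ℝ) - √k| ≤ 1 := by
  rw [abs_le]
  constructor
  · linarith [Nat.lt_floor_add_one √k]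
  · linarith [Nat.floor_le (sqrt_nonneg k)]

lemma abs_natCeil_sqrt_sub_le (k : ℕ) : |(⌈√k⌉₊ : ℝ) - √k| ≤ 1 := by
  rw [abs_le]
  constructor
  · linarith [Nat.le_ceil √k]
  · linarith [Nat.ceil_lt_add_one (sqrt_nonneg k)]

lemma abs_M₁_sub_le (n : ℕ) : |(M₁ n : ℝ) - 2 / 3 * n * √n| ≤ 2 * n := by
  simpa [M₁] using abs_sum_sub_le_of_abs_sub_sqrt_le abs_natFloor_sqrt_sub_le n

lemma abs_M₁_four_mul_sub_le (n : ℕ) :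
    |(M₁ (4 * n) : ℝ) - 16 / 3 * (n * √n)| ≤ 8 * n := by
  have h := abs_M₁_sub_le (4 * n)
  have hsqrt : √(4 * n) = 2 * √n := by
    rw [sqrt_mul' _ n.cast_nonneg, show (4 : ℝ) = 2 ^ 2 by norm_num, sqrt_sq zero_le_two]
  push_cast at h
  rwa [hsqrt, show (2 / 3 : ℝ) * (4 * n) * (2 * √n) = 16 / 3 * (n * √n) by ring,
    show (2 : ℝ) * (4 * n) = 8 * n by ring] at h

lemma abs_M₂four_sub_le (n : ℕ) :
    |(M₂four n : ℝ) - (2 / 3 + 4 / 3 * √2) * (n * √n)| ≤ 10 * n + 1 := by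
  have hceil := abs_sum_sub_le_of_abs_sub_sqrt_le abs_natCeil_sqrt_sub_le n
  have hfloor := abs_M₁_sub_le (2 * n)
  have hsqrt : √(2 * n) = √2 * √n := sqrt_mul zero_le_two n
  have hsqrt_le : (⌊√n⌋₊ : ℝ) ≤ n := by
    exact_mod_cast (nat_floor_real_sqrt_eq_nat_sqrt (a := n)).symm ▸ Nat.sqrt_le_self n
  have hM₂ : (M₂four n : ℝ) = (2 * n + 1 + 2 * ⌊√n⌋₊) + ∑ k ∈ Icc 1 n, (⌈√k⌉₊ : ℝ)
      + M₁ (2 * n) := by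
    simp [M₂four, M₁]
  push_cast at hfloor
  rw [hsqrt] at hfloor
  rw [hM₂, abs_le]
  rw [abs_le] at hceil hfloor
  constructor <;> nlinarith [sqrt_nonneg n, sqrt_nonneg 2]

lemma tendsto_div_mul_sqrt_of_abs_sub_le {f : ℕ → ℝ} {c C : ℝ}
    (h : ∀ᶠ n : ℕ in atTop, |f n - c * (n * √n)| ≤ C * n) :
    Tendsto (fun n : ℕ => f n / (n * √n)) atTop (nhds c) := by
  have hbound : Tendsto (fun n : ℕ => C / √n) atTop (nhds 0) :=
    tendsto_const_nhds.div_atTop (tendsto_sqrt_atTop.comp tendsto_natCast_atTop_atTop)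
  have herr : Tendsto (fun n : ℕ => f n / (n * √n) - c) atTop (nhds 0) := by
    refine squeeze_zero_norm' ?_ hbound
    filter_upwards [h, eventually_gt_atTop 0] with n hn hn_pos
    have hsqrt : 0 < √n := sqrt_pos.2 (by exact_mod_cast hn_pos)
    have hpos : (0 : ℝ) < n * √n := by positivity
    calc ‖f n / (n * √n) - c‖ = |f n - c * (n * √n)| / (n * √n) := by
          rw [norm_eq_abs, ← abs_of_pos hpos, ← abs_div, abs_of_pos hpos, sub_div,
            mul_div_cancel_right₀ _ hpos.ne']
      _ ≤ C * n / (n * √n) := by gcongr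
      _ = C / √n := by field_simp
  simpa using herr.add_const c

theorem M2_div_M1_tendsto :
    Tendsto (fun n : ℕ => (M₂four n : ℝ) / (M₁ (4 * n) : ℝ)) atTop
      (nhds (1 / 8 + Real.sqrt (1 / 8))) := by
  have hM₂ := tendsto_div_mul_sqrt_of_abs_sub_le (C := 11) <|
    (eventually_ge_atTop 1).mono fun n hn => (abs_M₂four_sub_le n).trans <| by
      linarith [show (1 : ℝ) ≤ n by exact_mod_cast hn]
  have hM₁ := tendsto_div_mul_sqrt_of_abs_sub_le (Eventually.of_forall abs_M₁_four_mul_sub_le)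
  have hlim : (2 / 3 + 4 / 3 * √2) / (16 / 3) = 1 / 8 + √(1 / 8) := by
    rw [show (1 / 8 : ℝ) = 2 / 4 ^ 2 by norm_num, sqrt_div' _ (by norm_num),
      sqrt_sq (by norm_num)]
    ring
  rw [← hlim]
  refine (hM₂.div hM₁ (by norm_num)).congr' ?_
  filter_upwards [eventually_ge_atTop 1] with n hn
  have : (n : ℝ) * √n ≠ 0 := by positivity
  exact div_div_div_cancel_right₀ this _ _
end
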